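/- arXiv:2205.10776 — 2 statements merged into one kernel-verified Lean document; each statement's English description precedes it below -/
import Mathlib

section
/- Let n ≥ 2, κ > 0, ε > 0, set b_1 = −12/(2n−1), b_2 = 3/(2κ(2n−1)), b_3 = −5, b_4 = 4(n+1)/(2n−1), b_5 = −12κ, and let m ∈ {1, …, n−1}. Define u : ℝ^n → ℝ^n by u(x) = (1/2 + G)(x_n e_m − x_m e_n) + (G^2 − 1/4)[ Σ_{i=1}^{n−1} (b_1 x_i x_m/δ) e_i + (b_2 + b_3 x_n G) e_m + ( x_m G (4κ b_1 |x'|^2/δ + b_4) + b_5 x_m x_n G^2 ) e_n ], where δ = δ(x') and G = G(x). Then u is divergence free: div u(x) = 0 at every point x ∈ ℝ^n. -/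
noncomputable section

/-- `δ(x') = ε + 2κ|x'|²` on `ℝ^{n-1}`. -/
def del (d : ℕ) (κ ε : ℝ) (x' : EuclideanSpace ℝ (Fin d)) : ℝ :=
  ε + 2 * κ * ‖x'‖ ^ 2

/-- `G(x) = x_n / δ(x')`, for `x = (x', x_n) ∈ ℝ^{n-1} × ℝ`. -/
def Gf (d : ℕ) (κ ε : ℝ) (x : EuclideanSpace ℝ (Fin d) × ℝ) : ℝ :=
  x.2 / del d κ ε x.1

/-- The divergence `div u = ∑_{i=1}^{n-1} ∂_i u_i + ∂_n u_n` of a vector field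
`u : ℝ^{n-1} × ℝ → ℝ^{n-1} × ℝ`. -/
def divg {d : ℕ} (u : EuclideanSpace ℝ (Fin d) × ℝ → EuclideanSpace ℝ (Fin d) × ℝ)
    (x : EuclideanSpace ℝ (Fin d) × ℝ) : ℝ :=
  (∑ i : Fin d, (fderiv ℝ u x (EuclideanSpace.single i 1, 0)).1 i)
    + (fderiv ℝ u x (0, 1)).2

/-- The auxiliary "rotational" velocity field
`u(x) = (1/2 + G)(x_n e_m − x_m e_n) + (G² − 1/4)[ ∑_i (b₁ x_i x_m/δ) e_i
+ (b₂ + b₃ x_n G) e_m + ( x_m G (4κ b₁ |x'|²/δ + b₄) + b₅ x_m x_n G² ) e_n ]`. -/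
def uRot (d : ℕ) (κ ε b1 b2 b3 b4 b5 : ℝ) (m : Fin d)
    (x : EuclideanSpace ℝ (Fin d) × ℝ) : EuclideanSpace ℝ (Fin d) × ℝ :=
  ((1 / 2 + Gf d κ ε x) • x.2 • EuclideanSpace.single m (1 : ℝ)
      + (Gf d κ ε x ^ 2 - 1 / 4) •
        ((∑ i : Fin d, (b1 * x.1 i * x.1 m / del d κ ε x.1) • EuclideanSpace.single i (1 : ℝ))
          + (b2 + b3 * x.2 * Gf d κ ε x) • EuclideanSpace.single m (1 : ℝ)),
    (1 / 2 + Gf d κ ε x) * (-(x.1 m))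
      + (Gf d κ ε x ^ 2 - 1 / 4) *
        (x.1 m * Gf d κ ε x * (4 * κ * b1 * ‖x.1‖ ^ 2 / del d κ ε x.1 + b4)
          + b5 * x.1 m * x.2 * Gf d κ ε x ^ 2))

abbrev Ed (d : ℕ) := EuclideanSpace ℝ (Fin d)

set_option maxHeartbeats 4000000 in
theorem aux (d : ℕ) (κ ε b1 b2 b3 b4 b5 : ℝ) (hκ : 0 < κ) (hε : 0 < ε)
    (hb1 : b1 * (2 * (d:ℝ) + 1) = -12)
    (hb2 : b2 * (2 * κ * (2 * (d:ℝ) + 1)) = 3)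
    (hb3 : b3 = -5)
    (hb4 : b4 * (2 * (d:ℝ) + 1) = 4 * ((d:ℝ) + 2))
    (hb5 : b5 = -12 * κ)
    (m : Fin d) (x : EuclideanSpace ℝ (Fin d) × ℝ) :
    divg (uRot d κ ε b1 b2 b3 b4 b5 m) x = 0 := by
  classical
  have hK : ∀ i, HasFDerivAt (fun y : Ed d × ℝ => y.1 i)
      ((EuclideanSpace.proj i).comp (ContinuousLinearMap.fst ℝ (Ed d) ℝ)) x := fun i =>
    ((EuclideanSpace.proj i).comp (ContinuousLinearMap.fst ℝ (Ed d) ℝ)).hasFDerivAt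
  have hT : HasFDerivAt (fun y : Ed d × ℝ => y.2) (ContinuousLinearMap.snd ℝ (Ed d) ℝ) x :=
    (ContinuousLinearMap.snd ℝ (Ed d) ℝ).hasFDerivAt
  have hsumappl : ∀ (v : Fin d → Ed d) (j : Fin d), (∑ i, v i) j = ∑ i, v i j := fun v j =>
    by rw [WithLp.ofLp_sum]; exact Finset.sum_apply j Finset.univ (fun i => (v i).ofLp)
  have hnorm : ∀ y : Ed d × ℝ, ‖y.1‖ ^ 2 = ∑ i, y.1 i * y.1 i := fun y => by
    rw [EuclideanSpace.norm_eq, Real.sq_sqrt (by positivity)]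
    simp [sq]
  have hN := (HasFDerivAt.sum (u := Finset.univ)
      (fun i _ => (hK i).mul (hK i))).congr_of_eventuallyEq
      (Filter.Eventually.of_forall fun y : Ed d × ℝ => (hnorm y).trans (by rw [Finset.sum_apply]; rfl))
  have hδ := ((hN.const_mul (2 * κ)).const_add ε).congr_of_eventuallyEq
      (Filter.Eventually.of_forall fun y : Ed d × ℝ => (rfl :
        del d κ ε y.1 = ε + 2 * κ * ‖y.1‖ ^ 2))
  have hδpos : 0 < del d κ ε x.1 := by
    have h0 : (0:ℝ) ≤ ‖x.1‖ ^ 2 := by positivity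
    unfold del; nlinarith
  have hδne : del d κ ε x.1 ≠ 0 := hδpos.ne'
  have hinv := (hasDerivAt_inv hδne).comp_hasFDerivAt x hδ
  have hG := (hT.mul hinv).congr_of_eventuallyEq
      (Filter.Eventually.of_forall fun y : Ed d × ℝ => (div_eq_mul_inv y.2 (del d κ ε y.1) :
        Gf d κ ε y = y.2 * (del d κ ε y.1)⁻¹))
  have hG2 := (hG.mul hG).congr_of_eventuallyEq
      (Filter.Eventually.of_forall fun y : Ed d × ℝ => (sq (Gf d κ ε y) ▸ (sq (Gf d κ ε y)).symm ▸ rfl :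
        Gf d κ ε y ^ 2 = Gf d κ ε y * Gf d κ ε y))
  have hc1 := hG.const_add (1 / 2)
  have hc2 := hG2.sub_const (1 / 4)
  have hfi := fun i => ((((hK i).const_mul b1).mul (hK m)).mul hinv).congr_of_eventuallyEq
      (Filter.Eventually.of_forall fun y : Ed d × ℝ =>
        (div_eq_mul_inv (b1 * y.1 i * y.1 m) (del d κ ε y.1)))
  have hc3 := ((hT.const_mul b3).mul hG).const_add b2
  have hF1 := (hc1.smul (hT.smul_const (EuclideanSpace.single m (1:ℝ)))).add
    (hc2.smul ((HasFDerivAt.sum (u := Finset.univ) (fun i _ =>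
        (hfi i).smul_const (EuclideanSpace.single i (1:ℝ)))).add
      (hc3.smul_const (EuclideanSpace.single m (1:ℝ)))))
  have hNc := (hN.const_mul (4 * κ * b1))
  have hT1 := ((hK m).mul hG).mul ((hNc.mul hinv).congr_of_eventuallyEq
      (Filter.Eventually.of_forall fun y : Ed d × ℝ =>
        (div_eq_mul_inv (4 * κ * b1 * ‖y.1‖ ^ 2) (del d κ ε y.1))) |>.add_const b4)
  have hT2 := (((hK m).const_mul b5).mul hT).mul hG2
  have hF2 := (hc1.mul ((hK m).neg)).add (hc2.mul (hT1.add hT2))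
  have hu := (HasFDerivAt.prodMk hF1 hF2).congr_of_eventuallyEq (f₁ := uRot d κ ε b1 b2 b3 b4 b5 m)
    (Filter.Eventually.of_forall fun y => by
      simp only [uRot, Pi.add_apply, Pi.smul_apply, Pi.smul_apply', Pi.mul_apply, Pi.neg_apply, Finset.sum_apply,
        Function.comp_apply] <;> rfl)
  obtain ⟨L, hL, hLval⟩ :
      ∃ L : Ed d × ℝ →L[ℝ] Ed d × ℝ, HasFDerivAt (uRot d κ ε b1 b2 b3 b4 b5 m) L x ∧
        (∑ i : Fin d, (L (EuclideanSpace.single i 1, 0)).1 i) + (L (0,1)).2 = 0 := by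
    refine ⟨_, hu, ?_⟩
    simp only [ContinuousLinearMap.prod_apply, ContinuousLinearMap.add_apply,
      ContinuousLinearMap.coe_smul', Pi.smul_apply, ContinuousLinearMap.smulRight_apply,
      ContinuousLinearMap.coe_sum', Finset.sum_apply, ContinuousLinearMap.coe_comp',
      Function.comp_apply, ContinuousLinearMap.coe_fst', ContinuousLinearMap.coe_snd',
      PiLp.proj_apply, ContinuousLinearMap.neg_apply,
      PiLp.add_apply, PiLp.smul_apply, PiLp.zero_apply, EuclideanSpace.single_apply,
      smul_eq_mul, mul_ite, ite_mul, mul_zero, zero_mul, mul_one, one_mul,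
      Finset.sum_ite_eq, Finset.sum_ite_eq', Finset.mem_univ, if_true, add_zero, zero_add,
      Finset.sum_const, Finset.card_univ, Fintype.card_fin, nsmul_eq_mul, hsumappl,
      Finset.sum_add_distrib, Pi.add_apply, Pi.mul_apply, Pi.neg_apply, Pi.smul_apply']
    have h2d : (0:ℝ) < 2 * (d:ℝ) + 1 := by positivity
    have hS1 : ∀ i : Fin d,
        (Gf d κ ε x ^ 2 - 1 / 4) *
              (b1 * x.1 i * x.1 m * (-(del d κ ε x.1 ^ 2)⁻¹ * (2 * κ * (x.1 i + x.1 i))) +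
                  (del d κ ε x.1)⁻¹ * ((if m = i then b1 * x.1 i else 0) + x.1 m * b1) +
                if i = m then b3 * x.2 * (x.2 * (-(del d κ ε x.1 ^ 2)⁻¹ * (2 * κ * (x.1 i + x.1 i)))) else 0)
        = (-(4 * κ * b1 * x.1 m * (Gf d κ ε x ^ 2 - 1 / 4)) * (del d κ ε x.1 ^ 2)⁻¹)
              * (x.1 i * x.1 i)
            + (Gf d κ ε x ^ 2 - 1 / 4) * b1 * x.1 m * (del d κ ε x.1)⁻¹
            + (if i = m then
                ((Gf d κ ε x ^ 2 - 1 / 4) * b1 * (del d κ ε x.1)⁻¹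
                  - (Gf d κ ε x ^ 2 - 1 / 4) * b3 * x.2 * x.2 * (4 * κ) * (del d κ ε x.1 ^ 2)⁻¹)
                    * x.1 i
              else 0) := by
      intro i
      by_cases h : i = m
      · subst h; simp; ring
      · simp only [if_neg h, if_neg (Ne.symm h)]; ring
    have hS2 : ∀ i : Fin d,
        (x.2 / del d κ ε x.1 * (x.2 * (-(del d κ ε x.1 ^ 2)⁻¹ * (2 * κ * (x.1 i + x.1 i)))) +
                x.2 / del d κ ε x.1 * (x.2 * (-(del d κ ε x.1 ^ 2)⁻¹ * (2 * κ * (x.1 i + x.1 i))))) *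
              (b1 * x.1 i * x.1 m / del d κ ε x.1 + if i = m then b2 + b3 * x.2 * (x.2 / del d κ ε x.1) else 0)
        = (-(8 * κ * x.2 * x.2 * b1 * x.1 m)
                * ((del d κ ε x.1 ^ 2)⁻¹ * ((del d κ ε x.1)⁻¹ * (del d κ ε x.1)⁻¹)))
              * (x.1 i * x.1 i)
            + 0
            + (if i = m then
                (-(8 * κ * x.2 * x.2) * ((del d κ ε x.1 ^ 2)⁻¹ * (del d κ ε x.1)⁻¹)
                    * (b2 + b3 * x.2 * x.2 * (del d κ ε x.1)⁻¹)) * x.1 i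
              else 0) := by
      intro i
      by_cases h : i = m
      · subst h; simp; ring
      · simp only [if_neg h]; ring
    simp only [hS1, hS2, Finset.sum_add_distrib, ← Finset.mul_sum, Finset.sum_ite_eq',
      Finset.mem_univ, if_true, Finset.sum_const, Finset.card_univ, Fintype.card_fin,
      nsmul_eq_mul]
    rw [← hnorm x]
    have hb1' : b1 = -12 / (2*(d:ℝ)+1) := by rw [eq_div_iff h2d.ne']; exact hb1
    have hb2' : b2 = 3 / (2*κ*(2*(d:ℝ)+1)) := by
      rw [eq_div_iff (by positivity)]; exact hb2
    have hb4' : b4 = 4*((d:ℝ)+2) / (2*(d:ℝ)+1) := by rw [eq_div_iff h2d.ne']; exact hb4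
    simp only [Gf]
    set D := del d κ ε x.1 with hDdef
    set s' := ‖x.1‖^2 with hs'def
    set q := x.1 m with hqdef
    set t := x.2 with htdef
    have hDne : D ≠ 0 := hδne
    have hB : 2*(d:ℝ)+1 ≠ 0 := h2d.ne'
    subst hb3 hb5
    rw [hb1', hb2', hb4']
    field_simp
    ring
  rw [divg, hL.fderiv]
  exact hLval

/-- With `b₁ = −12/(2n−1)`, `b₂ = 3/(2κ(2n−1))`, `b₃ = −5`, `b₄ = 4(n+1)/(2n−1)`,
`b₅ = −12κ`, the auxiliary rotational field is divergence free on all of `ℝⁿ`. -/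
theorem divergence_free_rotational_field
    (n : ℕ) (hn : 2 ≤ n) (κ ε : ℝ) (hκ : 0 < κ) (hε : 0 < ε)
    (b1 b2 b3 b4 b5 : ℝ)
    (hb1 : b1 = -12 / (2 * (n : ℝ) - 1))
    (hb2 : b2 = 3 / (2 * κ * (2 * (n : ℝ) - 1)))
    (hb3 : b3 = -5)
    (hb4 : b4 = 4 * ((n : ℝ) + 1) / (2 * (n : ℝ) - 1))
    (hb5 : b5 = -12 * κ)
    (m : Fin (n - 1)) (x : EuclideanSpace ℝ (Fin (n - 1)) × ℝ) :
    divg (uRot (n - 1) κ ε b1 b2 b3 b4 b5 m) x = 0 := by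
  have h1n : (1:ℕ) ≤ n := by omega
  have hcast : ((n - 1 : ℕ) : ℝ) = (n : ℝ) - 1 := by
    push_cast [Nat.cast_sub h1n]; ring
  have hge : (2:ℝ) ≤ (n:ℝ) := by exact_mod_cast hn
  have h2n : (2*(n:ℝ)-1) ≠ 0 := by nlinarith
  apply aux (n-1) κ ε b1 b2 b3 b4 b5 hκ hε _ _ hb3 _ hb5 m x
  · rw [hcast, hb1]; field_simp; ring
  · rw [hcast, hb2]; field_simp; ring
  · rw [hcast, hb4, div_mul_eq_mul_div, div_eq_iff h2n]; ring
end
end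

section
/- Let n ≥ 2, κ > 0, ε > 0, μ > 0, set b_1 = −12/(2n−1), b_2 = 3/(2κ(2n−1)), b_3 = −5, b_4 = 4(n+1)/(2n−1), b_5 = −12κ, b_6 = 3/(κ(2n−1)), and let m ∈ {1, …, n−1}. Define u : ℝ^n → ℝ^n by u(x) = (1/2 + G)(x_n e_m − x_m e_n) + (G^2 − 1/4)[ Σ_{i=1}^{n−1} (b_1 x_i x_m/δ) e_i + (b_2 + b_3 x_n G) e_m + ( x_m G B + b_5 x_m x_n G^2 ) e_n ], where B(x') = 4κ b_1 |x'|^2/δ + b_4, and define p : ℝ^n → ℝ by p(x) = (μ x_m/δ^2)[ (3 x_n^2/δ) B + b_6 ], with δ = δ(x') and G = G(x). Then at every x ∈ ℝ^n: (i) for j ∈ {1, …, n−1} with j ≠ m, μ ∂_n ∂_n u^{(j)}(x) − ∂_j p(x) = −3 μ x_n^2 ∂_j( x_m δ^{−3} (4κ b_1 |x'|^2/δ + b_4) ); (ii) for j = m, μ ∂_n ∂_n u^{(m)}(x) − ∂_m p(x) = μ (9 − 120 G^2)/(2δ) − 3 μ x_n^2 ∂_m( x_m δ^{−3} (4κ b_1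 |x'|^2/δ + b_4) ); (iii) for j = n, μ ∂_n ∂_n u^{(n)}(x) − ∂_n p(x) = μ b_5 x_m G (40 G^2 − 3)/(2δ). Here u^{(j)} denotes the j-th component of u. -/
noncomputable section

/-- Second partial derivative `∂_n ∂_n f` in the vertical variable `x_n`. -/
def dnn {d : ℕ} (f : EuclideanSpace ℝ (Fin d) × ℝ → ℝ)
    (x : EuclideanSpace ℝ (Fin d) × ℝ) : ℝ :=
  fderiv ℝ (fun y => fderiv ℝ f y (0, 1)) x (0, 1)

/-- The auxiliary pressure `p(x) = (μ x_m/δ²)[ (3 x_n²/δ) B + b₆ ]`, where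
`B(x') = 4κ b₁ |x'|²/δ + b₄`. -/
def pRot (d : ℕ) (κ ε μ b1 b4 b6 : ℝ) (m : Fin d)
    (x : EuclideanSpace ℝ (Fin d) × ℝ) : ℝ :=
  μ * x.1 m / del d κ ε x.1 ^ 2 *
    (3 * x.2 ^ 2 / del d κ ε x.1 * (4 * κ * b1 * ‖x.1‖ ^ 2 / del d κ ε x.1 + b4) + b6)

section Aux
open ContinuousLinearMap

section FD
variable {F : Type*} [NormedAddCommGroup F] [NormedSpace ℝ F]

lemma hasFD_pow {f : F → ℝ} {f' : F →L[ℝ] ℝ} {x : F} (h : HasFDerivAt f f' x) (n : ℕ) :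
    HasFDerivAt (fun y => f y ^ n) (((n : ℝ) * f x ^ (n-1)) • f') x :=
  (hasDerivAt_pow n (f x)).comp_hasFDerivAt x h

lemma hasFD_inv {f : F → ℝ} {f' : F →L[ℝ] ℝ} {x : F} (h : HasFDerivAt f f' x) (hne : f x ≠ 0) :
    HasFDerivAt (fun y => (f y)⁻¹) ((-((f x)^2)⁻¹) • f') x :=
  (hasDerivAt_inv hne).comp_hasFDerivAt x h

lemma hasFD_div {c e : F → ℝ} {c' e' : F →L[ℝ] ℝ} {x : F} (hc : HasFDerivAt c c' x)
    (he : HasFDerivAt e e' x) (hne : e x ≠ 0) :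
    HasFDerivAt (fun y => c y / e y) (c x • ((-((e x)^2)⁻¹) • e') + (e x)⁻¹ • c') x := by
  simp only [div_eq_mul_inv]
  exact hc.mul (hasFD_inv he hne)

end FD

variable {d : ℕ} {κ ε : ℝ}

lemma normsq_eq (a : EuclideanSpace ℝ (Fin d)) : ‖a‖^2 = ∑ i, a i ^2 := by
  simp [EuclideanSpace.norm_eq, Real.sq_sqrt, Finset.sum_nonneg, sq_nonneg, sq_abs]

lemma delpos (hκ : 0 < κ) (hε : 0 < ε) (a : EuclideanSpace ℝ (Fin d)) :
    0 < del d κ ε a := by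
  unfold del; nlinarith [sq_nonneg ‖a‖]

lemma normsq_del (hκ : κ ≠ 0) (a : EuclideanSpace ℝ (Fin d)) :
    ‖a‖^2 = (del d κ ε a - ε)/(2*κ) := by
  unfold del; field_simp
  ring

lemma sum_single_apply (c : Fin d → ℝ) (j : Fin d) :
    (∑ i, c i • EuclideanSpace.single i (1:ℝ)) j = c j := by
  have h : (∑ i, c i • EuclideanSpace.single i (1:ℝ)) j
      = ∑ i, (c i • EuclideanSpace.single i (1:ℝ)) j :=
    by rw [WithLp.ofLp_sum]; exact Finset.sum_apply j Finset.univ _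
  rw [h]
  simp [EuclideanSpace.single_apply]

lemma hcoord (i : Fin d) (y : EuclideanSpace ℝ (Fin d) × ℝ) :
    HasFDerivAt (fun y : EuclideanSpace ℝ (Fin d) × ℝ => y.1 i)
      ((EuclideanSpace.proj i).comp (ContinuousLinearMap.fst ℝ (EuclideanSpace ℝ (Fin d)) ℝ)) y :=
  ((EuclideanSpace.proj i).comp (ContinuousLinearMap.fst ℝ (EuclideanSpace ℝ (Fin d)) ℝ)).hasFDerivAt

lemma hsnd (y : EuclideanSpace ℝ (Fin d) × ℝ) :
    HasFDerivAt (fun y : EuclideanSpace ℝ (Fin d) × ℝ => y.2)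
      (ContinuousLinearMap.snd ℝ (EuclideanSpace ℝ (Fin d)) ℝ) y :=
  (ContinuousLinearMap.snd ℝ (EuclideanSpace ℝ (Fin d)) ℝ).hasFDerivAt

lemma hcoordE (i : Fin d) (a : EuclideanSpace ℝ (Fin d)) :
    HasFDerivAt (fun a : EuclideanSpace ℝ (Fin d) => a i)
      (EuclideanSpace.proj i : EuclideanSpace ℝ (Fin d) →L[ℝ] ℝ) a :=
  (EuclideanSpace.proj i : EuclideanSpace ℝ (Fin d) →L[ℝ] ℝ).hasFDerivAt

/-- derivative CLM of `y ↦ del d κ ε y.1` on the product space -/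
def LDp (d : ℕ) (κ : ℝ) (y : EuclideanSpace ℝ (Fin d) × ℝ) :
    (EuclideanSpace ℝ (Fin d) × ℝ) →L[ℝ] ℝ :=
  (2*κ) • ∑ i, (2 * y.1 i) •
    ((EuclideanSpace.proj i).comp (ContinuousLinearMap.fst ℝ (EuclideanSpace ℝ (Fin d)) ℝ))

/-- derivative CLM of `del d κ ε` on `E` -/
def LDe (d : ℕ) (κ : ℝ) (a : EuclideanSpace ℝ (Fin d)) :
    (EuclideanSpace ℝ (Fin d)) →L[ℝ] ℝ :=
  (2*κ) • ∑ i, (2 * a i) • (EuclideanSpace.proj i : EuclideanSpace ℝ (Fin d) →L[ℝ] ℝ)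

lemma hDelp (y : EuclideanSpace ℝ (Fin d) × ℝ) :
    HasFDerivAt (fun y : EuclideanSpace ℝ (Fin d) × ℝ => del d κ ε y.1) (LDp d κ y) y := by
  have h0 : (fun y : EuclideanSpace ℝ (Fin d) × ℝ => del d κ ε y.1)
      = fun y => ε + 2*κ*∑ i, y.1 i ^2 := by
    funext y; simp [del, normsq_eq]
  rw [h0]
  have h := (hasFDerivAt_const ε y).fun_add
    ((HasFDerivAt.fun_sum (u := (Finset.univ : Finset (Fin d)))
      (fun i _ => hasFD_pow (hcoord i y) 2)).const_mul (2*κ))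
  refine h.congr_fderiv ?_
  unfold LDp
  ext v <;> (simp [ContinuousLinearMap.comp_apply]; try ring)

lemma hDelE (a : EuclideanSpace ℝ (Fin d)) :
    HasFDerivAt (fun a : EuclideanSpace ℝ (Fin d) => del d κ ε a) (LDe d κ a) a := by
  have h0 : (fun a : EuclideanSpace ℝ (Fin d) => del d κ ε a)
      = fun a => ε + 2*κ*∑ i, a i ^2 := by
    funext a; simp [del, normsq_eq]
  rw [h0]
  have h := (hasFDerivAt_const ε a).fun_add
    ((HasFDerivAt.fun_sum (u := (Finset.univ : Finset (Fin d)))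
      (fun i _ => hasFD_pow (hcoordE i a) 2)).const_mul (2*κ))
  refine h.congr_fderiv ?_
  unfold LDe
  ext v
  simp [ContinuousLinearMap.comp_apply]
  try ring

@[simp] lemma LDp_vert (y : EuclideanSpace ℝ (Fin d) × ℝ) (t : ℝ) :
    LDp d κ y ((0 : EuclideanSpace ℝ (Fin d)), t) = 0 := by
  unfold LDp; simp

@[simp] lemma LDp_single (y : EuclideanSpace ℝ (Fin d) × ℝ) (j : Fin d) (t : ℝ) :
    LDp d κ y (EuclideanSpace.single j 1, t) = 4*κ*y.1 j := by
  unfold LDp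
  simp [EuclideanSpace.single_apply, Finset.sum_ite_eq, mul_ite]
  ring

@[simp] lemma LDe_single (a : EuclideanSpace ℝ (Fin d)) (j : Fin d) :
    LDe d κ a (EuclideanSpace.single j 1) = 4*κ*a j := by
  unfold LDe
  simp [EuclideanSpace.single_apply, Finset.sum_ite_eq, mul_ite]
  ring

end Aux

set_option maxHeartbeats 4000000

/-- Stokes residual identities for the rotational auxiliary pair `(u, p)` with the
constants `b₁, …, b₆` of the paper. -/
theorem stokes_residual_rotational_field
    (n : ℕ) (hn : 2 ≤ n) (κ ε μ : ℝ) (hκ : 0 < κ) (hε : 0 < ε) (hμ : 0 < μ)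
    (b1 b2 b3 b4 b5 b6 : ℝ)
    (hb1 : b1 = -12 / (2 * (n : ℝ) - 1))
    (hb2 : b2 = 3 / (2 * κ * (2 * (n : ℝ) - 1)))
    (hb3 : b3 = -5)
    (hb4 : b4 = 4 * ((n : ℝ) + 1) / (2 * (n : ℝ) - 1))
    (hb5 : b5 = -12 * κ)
    (hb6 : b6 = 3 / (κ * (2 * (n : ℝ) - 1)))
    (m : Fin (n - 1)) (x : EuclideanSpace ℝ (Fin (n - 1)) × ℝ) :
    (∀ j : Fin (n - 1), j ≠ m →
        μ * dnn (fun y => (uRot (n - 1) κ ε b1 b2 b3 b4 b5 m y).1 j) x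
            - fderiv ℝ (pRot (n - 1) κ ε μ b1 b4 b6 m) x (EuclideanSpace.single j 1, 0)
          = -(3 * μ * x.2 ^ 2) *
              fderiv ℝ (fun y' : EuclideanSpace ℝ (Fin (n - 1)) =>
                  y' m * (del (n - 1) κ ε y' ^ 3)⁻¹ *
                    (4 * κ * b1 * ‖y'‖ ^ 2 / del (n - 1) κ ε y' + b4))
                x.1 (EuclideanSpace.single j 1)) ∧
      (μ * dnn (fun y => (uRot (n - 1) κ ε b1 b2 b3 b4 b5 m y).1 m) x
          - fderiv ℝ (pRot (n - 1) κ ε μ b1 b4 b6 m) x (EuclideanSpace.single m 1, 0)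
        = μ * (9 - 120 * Gf (n - 1) κ ε x ^ 2) / (2 * del (n - 1) κ ε x.1)
          - (3 * μ * x.2 ^ 2) *
              fderiv ℝ (fun y' : EuclideanSpace ℝ (Fin (n - 1)) =>
                  y' m * (del (n - 1) κ ε y' ^ 3)⁻¹ *
                    (4 * κ * b1 * ‖y'‖ ^ 2 / del (n - 1) κ ε y' + b4))
                x.1 (EuclideanSpace.single m 1)) ∧
      μ * dnn (fun y => (uRot (n - 1) κ ε b1 b2 b3 b4 b5 m y).2) x
          - fderiv ℝ (pRot (n - 1) κ ε μ b1 b4 b6 m) x (0, 1)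
        = μ * b5 * x.1 m * Gf (n - 1) κ ε x * (40 * Gf (n - 1) κ ε x ^ 2 - 3)
            / (2 * del (n - 1) κ ε x.1) := by
  have hκ0 : κ ≠ 0 := ne_of_gt hκ
  have hn2 : (2:ℝ) ≤ (n:ℝ) := by exact_mod_cast hn
  have hw : (2 * (n:ℝ) - 1) ≠ 0 := by nlinarith
  have nex : del (n - 1) κ ε x.1 ≠ 0 := (delpos hκ hε x.1).ne'
  have hDp : ∀ y : EuclideanSpace ℝ (Fin (n - 1)) × ℝ,
      HasFDerivAt (fun y : EuclideanSpace ℝ (Fin (n - 1)) × ℝ => del (n - 1) κ ε y.1)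
        (LDp (n - 1) κ y) y := fun y => hDelp y
  have hDe : ∀ a : EuclideanSpace ℝ (Fin (n - 1)),
      HasFDerivAt (fun a : EuclideanSpace ℝ (Fin (n - 1)) => del (n - 1) κ ε a)
        (LDe (n - 1) κ a) a := fun a => hDelE a
  -- canonical form of the pressure
  have hprw : pRot (n - 1) κ ε μ b1 b4 b6 m
      = fun y : EuclideanSpace ℝ (Fin (n - 1)) × ℝ =>
          μ * y.1 m / del (n - 1) κ ε y.1 ^ 2 *
            (3 * y.2 ^ 2 / del (n - 1) κ ε y.1 *
              (2 * b1 * (del (n - 1) κ ε y.1 - ε) / del (n - 1) κ ε y.1 + b4) + b6) := by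
    funext y
    have ne : del (n - 1) κ ε y.1 ≠ 0 := (delpos hκ hε y.1).ne'
    simp only [pRot]
    rw [normsq_del (ε := ε) hκ0]
    field_simp
    ring
  -- derivative of the canonical pressure at x
  have hP := (hasFD_div ((hcoord m x).const_mul μ) (hasFD_pow (hDp x) 2) (pow_ne_zero 2 nex)).fun_mul
    (((hasFD_div ((hasFD_pow (hsnd x) 2).const_mul 3) (hDp x) nex).fun_mul
      ((hasFD_div (((hDp x).sub_const ε).const_mul (2*b1)) (hDp x) nex).add_const b4)).add_const b6)
  -- canonical form of the RHS auxiliary function and its derivative at x.1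
  have hhrw : (fun y' : EuclideanSpace ℝ (Fin (n - 1)) =>
        y' m * (del (n - 1) κ ε y' ^ 3)⁻¹ *
          (4 * κ * b1 * ‖y'‖ ^ 2 / del (n - 1) κ ε y' + b4))
      = fun y' : EuclideanSpace ℝ (Fin (n - 1)) =>
          y' m * (del (n - 1) κ ε y' ^ 3)⁻¹ *
            (2 * b1 * (del (n - 1) κ ε y' - ε) / del (n - 1) κ ε y' + b4) := by
    funext a
    have ne : del (n - 1) κ ε a ≠ 0 := (delpos hκ hε a).ne'
    rw [normsq_del (ε := ε) hκ0]
    field_simp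
    ring
  have hH := ((hcoordE m x.1).fun_mul (hasFD_inv (hasFD_pow (hDe x.1) 3) (pow_ne_zero 3 nex))).fun_mul
    ((hasFD_div (((hDe x.1).sub_const ε).const_mul (2*b1)) (hDe x.1) nex).add_const b4)
  refine ⟨fun j hj => ?_, ?_, ?_⟩
  · -- case (i) : j ≠ m
    have hfun : (fun y => (uRot (n - 1) κ ε b1 b2 b3 b4 b5 m y).1 j)
        = fun y : EuclideanSpace ℝ (Fin (n - 1)) × ℝ =>
            ((y.2 / del (n - 1) κ ε y.1) ^ 2 - 1/4) *
              (b1 * y.1 j * y.1 m / del (n - 1) κ ε y.1) := by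
      funext y
      simp [uRot, Gf, EuclideanSpace.single_apply, hj, sum_single_apply, PiLp.add_apply,
        PiLp.smul_apply, smul_eq_mul]
    simp only [dnn]
    rw [hfun]
    have hkey : (fun y => fderiv ℝ (fun y : EuclideanSpace ℝ (Fin (n - 1)) × ℝ =>
          ((y.2 / del (n - 1) κ ε y.1) ^ 2 - 1/4) *
            (b1 * y.1 j * y.1 m / del (n - 1) κ ε y.1)) y (0, 1))
        = fun y : EuclideanSpace ℝ (Fin (n - 1)) × ℝ =>
            2 * b1 * y.1 j * y.1 m * y.2 / del (n - 1) κ ε y.1 ^ 3 := by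
      funext y
      have ne : del (n - 1) κ ε y.1 ≠ 0 := (delpos hκ hε y.1).ne'
      have h := (((hasFD_pow (hasFD_div (hsnd y) (hDp y) ne) 2).sub_const (1/4:ℝ)).fun_mul
        (hasFD_div (((hcoord j y).const_mul b1).fun_mul (hcoord m y)) (hDp y) ne))
      rw [(h : HasFDerivAt _ _ y).fderiv]
      simp
      field_simp
    rw [hkey]
    have hg := hasFD_div ((((hcoord j x).const_mul (2*b1)).fun_mul (hcoord m x)).fun_mul (hsnd x))
      (hasFD_pow (hDp x) 3) (pow_ne_zero 3 nex)
    rw [hprw, hhrw, (hg : HasFDerivAt _ _ x).fderiv, (hP : HasFDerivAt _ _ x).fderiv,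
      (hH : HasFDerivAt _ _ x.1).fderiv]
    have hmj : m ≠ j := Ne.symm hj
    simp [EuclideanSpace.single_apply, hmj]
    rw [hb1, hb6]
    field_simp
    ring
  · -- case (ii) : j = m
    have hfun : (fun y => (uRot (n - 1) κ ε b1 b2 b3 b4 b5 m y).1 m)
        = fun y : EuclideanSpace ℝ (Fin (n - 1)) × ℝ =>
            (1/2 + y.2 / del (n - 1) κ ε y.1) * y.2
              + ((y.2 / del (n - 1) κ ε y.1) ^ 2 - 1/4) *
                (b1 * y.1 m ^ 2 / del (n - 1) κ ε y.1 + b2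
                  + b3 * y.2 ^ 2 / del (n - 1) κ ε y.1) := by
      funext y
      have ne : del (n - 1) κ ε y.1 ≠ 0 := (delpos hκ hε y.1).ne'
      simp [uRot, Gf, EuclideanSpace.single_apply, sum_single_apply, PiLp.add_apply,
        PiLp.smul_apply, smul_eq_mul]
      field_simp
      ring
    simp only [dnn]
    rw [hfun]
    have hkey : (fun y => fderiv ℝ (fun y : EuclideanSpace ℝ (Fin (n - 1)) × ℝ =>
          (1/2 + y.2 / del (n - 1) κ ε y.1) * y.2
            + ((y.2 / del (n - 1) κ ε y.1) ^ 2 - 1/4) *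
              (b1 * y.1 m ^ 2 / del (n - 1) κ ε y.1 + b2
                + b3 * y.2 ^ 2 / del (n - 1) κ ε y.1)) y (0, 1))
        = fun y : EuclideanSpace ℝ (Fin (n - 1)) × ℝ =>
            1/2 + 2 * y.2 / del (n - 1) κ ε y.1
              + 2 * (b1 * y.1 m ^ 2 / del (n - 1) κ ε y.1 + b2) * y.2 / del (n - 1) κ ε y.1 ^ 2
              + (4 * b3 * y.2 ^ 3 / del (n - 1) κ ε y.1 ^ 3
                  - b3 * y.2 / (2 * del (n - 1) κ ε y.1)) := by
      funext y
      have ne : del (n - 1) κ ε y.1 ≠ 0 := (delpos hκ hε y.1).ne'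
      have h := (((hasFDerivAt_const (1/2:ℝ) y).fun_add (hasFD_div (hsnd y) (hDp y) ne)).fun_mul (hsnd y)).fun_add
        (((hasFD_pow (hasFD_div (hsnd y) (hDp y) ne) 2).sub_const (1/4:ℝ)).fun_mul
          (((hasFD_div ((hasFD_pow (hcoord m y) 2).const_mul b1) (hDp y) ne).add_const b2).fun_add
            (hasFD_div ((hasFD_pow (hsnd y) 2).const_mul b3) (hDp y) ne)))
      rw [(h : HasFDerivAt _ _ y).fderiv]
      simp
      field_simp
      ring
    rw [hkey]
    have ne2 : (2 : ℝ) * del (n - 1) κ ε x.1 ≠ 0 := by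
      exact mul_ne_zero two_ne_zero nex
    have t1 := (hasFDerivAt_const (1/2:ℝ) x).fun_add (hasFD_div ((hsnd x).const_mul 2) (hDp x) nex)
    have t2 := hasFD_div ((((hasFD_div ((hasFD_pow (hcoord m x) 2).const_mul b1) (hDp x) nex).add_const b2).const_mul 2).fun_mul (hsnd x))
      (hasFD_pow (hDp x) 2) (pow_ne_zero 2 nex)
    have t3 := (hasFD_div ((hasFD_pow (hsnd x) 3).const_mul (4*b3)) (hasFD_pow (hDp x) 3) (pow_ne_zero 3 nex)).fun_sub
      (hasFD_div ((hsnd x).const_mul b3) ((hDp x).const_mul 2) ne2)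
    have hg := (t1.fun_add t2).fun_add t3
    rw [hprw, hhrw, (hg : HasFDerivAt _ _ x).fderiv, (hP : HasFDerivAt _ _ x).fderiv,
      (hH : HasFDerivAt _ _ x.1).fderiv]
    simp only [Gf]
    simp [EuclideanSpace.single_apply]
    rw [hb1, hb2, hb3, hb6]
    field_simp
    ring
  · -- case (iii) : vertical component
    have hfun : (fun y => (uRot (n - 1) κ ε b1 b2 b3 b4 b5 m y).2)
        = fun y : EuclideanSpace ℝ (Fin (n - 1)) × ℝ =>
            (1/2 + y.2 / del (n - 1) κ ε y.1) * (-(y.1 m))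
              + ((y.2 / del (n - 1) κ ε y.1) ^ 2 - 1/4) *
                (y.1 m * (y.2 / del (n - 1) κ ε y.1) *
                    (2 * b1 * (del (n - 1) κ ε y.1 - ε) / del (n - 1) κ ε y.1 + b4)
                  + b5 * y.1 m * y.2 * (y.2 / del (n - 1) κ ε y.1) ^ 2) := by
      funext y
      have ne : del (n - 1) κ ε y.1 ≠ 0 := (delpos hκ hε y.1).ne'
      simp only [uRot, Gf]
      rw [normsq_del (ε := ε) hκ0]
      field_simp
      ring
    simp only [dnn]
    rw [hfun]
    have hkey : (fun y => fderiv ℝ (fun y : EuclideanSpace ℝ (Fin (n - 1)) × ℝ =>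
          (1/2 + y.2 / del (n - 1) κ ε y.1) * (-(y.1 m))
            + ((y.2 / del (n - 1) κ ε y.1) ^ 2 - 1/4) *
              (y.1 m * (y.2 / del (n - 1) κ ε y.1) *
                  (2 * b1 * (del (n - 1) κ ε y.1 - ε) / del (n - 1) κ ε y.1 + b4)
                + b5 * y.1 m * y.2 * (y.2 / del (n - 1) κ ε y.1) ^ 2)) y (0, 1))
        = fun y : EuclideanSpace ℝ (Fin (n - 1)) × ℝ =>
            (-(y.1 m)) / del (n - 1) κ ε y.1
              + y.1 m * (2 * b1 * (del (n - 1) κ ε y.1 - ε) / del (n - 1) κ ε y.1 + b4) *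
                  (3 * y.2 ^ 2 / del (n - 1) κ ε y.1 ^ 3 - 1 / (4 * del (n - 1) κ ε y.1))
              + b5 * y.1 m * (5 * y.2 ^ 4 / del (n - 1) κ ε y.1 ^ 4
                  - 3 * y.2 ^ 2 / (4 * del (n - 1) κ ε y.1 ^ 2)) := by
      funext y
      have ne : del (n - 1) κ ε y.1 ≠ 0 := (delpos hκ hε y.1).ne'
      have hB := (hasFD_div (((hDp y).sub_const ε).const_mul (2*b1)) (hDp y) ne).add_const b4
      have h := (((hasFDerivAt_const (1/2:ℝ) y).fun_add (hasFD_div (hsnd y) (hDp y) ne)).fun_mul ((hcoord m y).fun_neg)).fun_add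
        (((hasFD_pow (hasFD_div (hsnd y) (hDp y) ne) 2).sub_const (1/4:ℝ)).fun_mul
          ((((hcoord m y).fun_mul (hasFD_div (hsnd y) (hDp y) ne)).fun_mul hB).fun_add
            ((((hcoord m y).const_mul b5).fun_mul (hsnd y)).fun_mul
              (hasFD_pow (hasFD_div (hsnd y) (hDp y) ne) 2))))
      rw [(h : HasFDerivAt _ _ y).fderiv]
      simp
      field_simp
      ring
    rw [hkey]
    have ne4 : (4 : ℝ) * del (n - 1) κ ε x.1 ≠ 0 := by positivity
    have ne42 : (4 : ℝ) * del (n - 1) κ ε x.1 ^ 2 ≠ 0 := by positivity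
    have hB := (hasFD_div (((hDp x).sub_const ε).const_mul (2*b1)) (hDp x) nex).add_const b4
    have hg := ((hasFD_div ((hcoord m x).fun_neg) (hDp x) nex).fun_add
      (((hcoord m x).fun_mul hB).fun_mul
        ((hasFD_div ((hasFD_pow (hsnd x) 2).const_mul 3) (hasFD_pow (hDp x) 3) (pow_ne_zero 3 nex)).fun_sub
          (hasFD_div (hasFDerivAt_const (1:ℝ) x) ((hDp x).const_mul 4) ne4)))).fun_add
      (((hcoord m x).const_mul b5).fun_mul
        ((hasFD_div ((hasFD_pow (hsnd x) 4).const_mul 5) (hasFD_pow (hDp x) 4) (pow_ne_zero 4 nex)).fun_sub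
          (hasFD_div ((hasFD_pow (hsnd x) 2).const_mul 3) ((hasFD_pow (hDp x) 2).const_mul 4) ne42)))
    rw [hprw, (hg : HasFDerivAt _ _ x).fderiv, (hP : HasFDerivAt _ _ x).fderiv]
    simp only [Gf]
    simp
    field_simp
    ring
end
end
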